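/- arXiv:1707.06443 — 3 statements merged into one kernel-verified Lean document; each statement's English description precedes it below -/
import Mathlib

section
/- If G₁ = (V₁, E₁) and G₂ = (V₂, E₂) are graphs whose vertex sets intersect exactly in one vertex z (V₁ ∩ V₂ = {z}), G = G₁ ∪ G₂ is their union, S₁ is a [1,2]-set of G₁, S₂ is a [1,2]-set of G₂, and z ∈ S₁ ∩ S₂, then S₁ ∪ S₂ is a [1,2]-set of G. -/
open scoped Classical

/-- Number of neighbors of `v` that lie in `S`, i.e. `|N(v) ∩ S|`. -/
noncomputable def nbrCount {V : Type*} [Fintype V] (G : SimpleGraph V) (S : Finset V) (v : V) : ℕ :=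
  (Finset.univ.filter (fun u => G.Adj v u ∧ u ∈ S)).card

/-- `S` is a dominating set of `G`. -/
def IsDominatingSet {V : Type*} [Fintype V] (G : SimpleGraph V) (S : Finset V) : Prop :=
  ∀ v, v ∉ S → 1 ≤ nbrCount G S v

/-- `S` is a total dominating set of `G`. -/
def IsTotalDominatingSet {V : Type*} [Fintype V] (G : SimpleGraph V) (S : Finset V) : Prop :=
  ∀ v, 1 ≤ nbrCount G S v

/-- `S` is a `[1,2]`-set of `G`. -/
def IsOneTwoSet {V : Type*} [Fintype V] (G : SimpleGraph V) (S : Finset V) : Prop :=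
  ∀ v, v ∉ S → 1 ≤ nbrCount G S v ∧ nbrCount G S v ≤ 2

/-- `S` is a total `[1,2]`-set of `G`. -/
def IsTotalOneTwoSet {V : Type*} [Fintype V] (G : SimpleGraph V) (S : Finset V) : Prop :=
  ∀ v, 1 ≤ nbrCount G S v ∧ nbrCount G S v ≤ 2

/-- The domination number `γ(G)`. -/
noncomputable def gamma {V : Type*} [Fintype V] (G : SimpleGraph V) : ℕ :=
  sInf {n | ∃ S : Finset V, IsDominatingSet G S ∧ S.card = n}

/-- The `[1,2]`-domination number `γ_{[1,2]}(G)`. -/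
noncomputable def gamma12 {V : Type*} [Fintype V] (G : SimpleGraph V) : ℕ :=
  sInf {n | ∃ S : Finset V, IsOneTwoSet G S ∧ S.card = n}

/-- The total `[1,2]`-domination number `γ_{t[1,2]}(G)`. -/
noncomputable def gammaT12 {V : Type*} [Fintype V] (G : SimpleGraph V) : ℕ :=
  sInf {n | ∃ S : Finset V, IsTotalOneTwoSet G S ∧ S.card = n}

/-- `S` satisfies the `[1,2]`-condition on the vertex set `W` in `G`. -/
def IsOneTwoOn {V : Type*} [Fintype V] (G : SimpleGraph V) (W S : Finset V) : Prop :=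
  ∀ v ∈ W, v ∉ S → 1 ≤ nbrCount G S v ∧ nbrCount G S v ≤ 2

lemma nbrCount_union_eq {V : Type*} [Fintype V]
    (G₁ G₂ : SimpleGraph V) (A B S₁ S₂ : Finset V) (z : V)
    (hA : ∀ u v, G₁.Adj u v → u ∈ A ∧ v ∈ A)
    (hB : ∀ u v, G₂.Adj u v → u ∈ B ∧ v ∈ B)
    (hAB : A ∩ B = {z})
    (hS₂ : S₂ ⊆ B) (hz₁ : z ∈ S₁) (v : V) (hvB : v ∉ B) :
    nbrCount (G₁ ⊔ G₂) (S₁ ∪ S₂) v = nbrCount G₁ S₁ v := by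
  unfold nbrCount
  congr 1
  ext u
  simp only [Finset.mem_filter, Finset.mem_univ, true_and, SimpleGraph.sup_adj, Finset.mem_union]
  constructor
  · rintro ⟨h1 | h2, hu⟩
    · refine ⟨h1, ?_⟩
      rcases hu with h | h
      · exact h
      · have : u ∈ A ∩ B := Finset.mem_inter.2 ⟨(hA _ _ h1).2, hS₂ h⟩
        rw [hAB] at this
        exact (Finset.mem_singleton.1 this) ▸ hz₁
    · exact absurd (hB _ _ h2).1 hvB
  · rintro ⟨h1, hu⟩; exact ⟨Or.inl h1, Or.inl hu⟩

theorem oneTwo_union_one_shared_vertex {V : Type*} [Fintype V]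
    (G₁ G₂ : SimpleGraph V) (A B S₁ S₂ : Finset V) (z : V)
    (hA : ∀ u v, G₁.Adj u v → u ∈ A ∧ v ∈ A)
    (hB : ∀ u v, G₂.Adj u v → u ∈ B ∧ v ∈ B)
    (hAB : A ∩ B = {z})
    (hE : ∀ u v, ¬ (G₁.Adj u v ∧ G₂.Adj u v))
    (hS₁ : S₁ ⊆ A) (hS₂ : S₂ ⊆ B)
    (h₁ : IsOneTwoOn G₁ A S₁) (h₂ : IsOneTwoOn G₂ B S₂)
    (hz₁ : z ∈ S₁) (hz₂ : z ∈ S₂) :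
    IsOneTwoOn (G₁ ⊔ G₂) (A ∪ B) (S₁ ∪ S₂) := by
  intro v hv hvS
  have hzS₁ : v ≠ z := fun h => hvS (h ▸ Finset.mem_union_left _ hz₁)
  rcases Finset.mem_union.1 hv with hvA | hvB
  · have hvB : v ∉ B := fun hb => hzS₁ (Finset.mem_singleton.1 (hAB ▸ Finset.mem_inter.2 ⟨hvA, hb⟩))
    rw [nbrCount_union_eq G₁ G₂ A B S₁ S₂ z hA hB hAB hS₂ hz₁ v hvB]
    exact h₁ v hvA (fun h => hvS (Finset.mem_union_left _ h))
  · have hvA : v ∉ A := fun ha => hzS₁ (Finset.mem_singleton.1 (hAB ▸ Finset.mem_inter.2 ⟨ha, hvB⟩))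
    have : nbrCount (G₁ ⊔ G₂) (S₁ ∪ S₂) v = nbrCount G₂ S₂ v := by
      have := nbrCount_union_eq G₂ G₁ B A S₂ S₁ z hB hA (by rw [Finset.inter_comm, hAB]) hS₁ hz₂ v hvA
      rw [← this]
      unfold nbrCount
      congr 1
      ext u
      simp only [Finset.mem_filter, Finset.mem_univ, true_and, SimpleGraph.sup_adj, Finset.mem_union]
      tauto
    rw [this]
    exact h₂ v hvB (fun h => hvS (Finset.mem_union_right _ h))
end

section
/- If G₁ and G₂ share exactly one vertex z, S₁ is a total [1,2]-set of G₁, S₂ is a total [1,2]-set of G₂, z ∈ S₁ ∩ S₂, and z has exactly one neighbor in S₁ within G₁ and exactly one neighbor in S₂ within G₂, then S₁ ∪ S₂ is a total [1,2]-set of G₁ ∪ G₂. -/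
open scoped Classical

/-- `S` satisfies the total `[1,2]`-condition on the vertex set `W` in `G`. -/
def IsTotalOneTwoOn {V : Type*} [Fintype V] (G : SimpleGraph V) (W S : Finset V) : Prop :=
  ∀ v ∈ W, 1 ≤ nbrCount G S v ∧ nbrCount G S v ≤ 2

section nbrCount

variable {V : Type*} [Fintype V]

lemma nbrCount_eq_zero_of_forall_not_adj {G : SimpleGraph V} {S : Finset V} {v : V}
    (hv : ∀ u, ¬ G.Adj v u) : nbrCount G S v = 0 := by
  simp [nbrCount, hv]

lemma nbrCount_sup_union {G₁ G₂ : SimpleGraph V} {S₁ S₂ : Finset V} {v : V}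
    (h₁₂ : ∀ u, G₁.Adj v u → u ∈ S₂ → u ∈ S₁) (h₂₁ : ∀ u, G₂.Adj v u → u ∈ S₁ → u ∈ S₂)
    (hdisj : ∀ u, G₁.Adj v u → ¬ G₂.Adj v u) :
    nbrCount (G₁ ⊔ G₂) (S₁ ∪ S₂) v = nbrCount G₁ S₁ v + nbrCount G₂ S₂ v := by
  unfold nbrCount
  rw [← Finset.card_union_of_disjoint]
  · congr 1
    ext u
    simp only [Finset.mem_filter, Finset.mem_union, Finset.mem_univ, true_and,
      SimpleGraph.sup_adj]
    have := h₁₂ u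
    have := h₂₁ u
    tauto
  · exact Finset.disjoint_filter.2 fun u _ hu₁ hu₂ => hdisj u hu₁.1 hu₂.1

end nbrCount

theorem totalOneTwo_union_one_shared_vertex_general {V : Type*} [Fintype V]
    (G₁ G₂ : SimpleGraph V) (A B S₁ S₂ : Finset V) (z : V)
    (hA : ∀ u v, G₁.Adj u v → u ∈ A ∧ v ∈ A)
    (hB : ∀ u v, G₂.Adj u v → u ∈ B ∧ v ∈ B)
    (hAB : A ∩ B = {z})
    (hS₁ : S₁ ⊆ A) (hS₂ : S₂ ⊆ B)
    (h₁ : IsTotalOneTwoOn G₁ A S₁) (h₂ : IsTotalOneTwoOn G₂ B S₂)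
    (hz₁ : z ∈ S₁) (hz₂ : z ∈ S₂)
    (hd₁ : nbrCount G₁ S₁ z = 1) (hd₂ : nbrCount G₂ S₂ z = 1) :
    IsTotalOneTwoOn (G₁ ⊔ G₂) (A ∪ B) (S₁ ∪ S₂) := by
  have hz : ∀ u ∈ A, u ∈ B → u = z := fun u ha hb => by
    simpa [hAB] using Finset.mem_inter.2 ⟨ha, hb⟩
  intro v hv
  -- Every vertex of `A ∩ B` is `z ∈ S₁ ∩ S₂`, and an edge of both graphs would be a loop at `z`.
  have hsplit : nbrCount (G₁ ⊔ G₂) (S₁ ∪ S₂) v = nbrCount G₁ S₁ v + nbrCount G₂ S₂ v :=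
    nbrCount_sup_union (fun u hvu hu => hz u (hA v u hvu).2 (hS₂ hu) ▸ hz₁)
      (fun u hvu hu => hz u (hS₁ hu) (hB v u hvu).2 ▸ hz₂)
      (fun u hvu₁ hvu₂ => G₁.ne_of_adj hvu₁
        ((hz v (hA v u hvu₁).1 (hB v u hvu₂).1).trans (hz u (hA v u hvu₁).2 (hB v u hvu₂).2).symm))
  rw [hsplit]
  by_cases hvz : v = z
  · subst hvz
    omega
  rcases Finset.mem_union.1 hv with hvA | hvB
  · have hvB : v ∉ B := fun hvB => hvz (hz v hvA hvB)
    rw [nbrCount_eq_zero_of_forall_not_adj fun u hvu => hvB (hB v u hvu).1, add_zero]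
    exact h₁ v hvA
  · have hvA : v ∉ A := fun hvA => hvz (hz v hvA hvB)
    rw [nbrCount_eq_zero_of_forall_not_adj fun u hvu => hvA (hA v u hvu).1, zero_add]
    exact h₂ v hvB

theorem totalOneTwo_union_one_shared_vertex {V : Type*} [Fintype V]
    (G₁ G₂ : SimpleGraph V) (A B S₁ S₂ : Finset V) (z : V)
    (hA : ∀ u v, G₁.Adj u v → u ∈ A ∧ v ∈ A)
    (hB : ∀ u v, G₂.Adj u v → u ∈ B ∧ v ∈ B)
    (hAB : A ∩ B = {z})
    (hE : ∀ u v, ¬ (G₁.Adj u v ∧ G₂.Adj u v))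
    (hS₁ : S₁ ⊆ A) (hS₂ : S₂ ⊆ B)
    (h₁ : IsTotalOneTwoOn G₁ A S₁) (h₂ : IsTotalOneTwoOn G₂ B S₂)
    (hz₁ : z ∈ S₁) (hz₂ : z ∈ S₂)
    (hd₁ : nbrCount G₁ S₁ z = 1) (hd₂ : nbrCount G₂ S₂ z = 1) :
    IsTotalOneTwoOn (G₁ ⊔ G₂) (A ∪ B) (S₁ ∪ S₂) :=
  totalOneTwo_union_one_shared_vertex_general G₁ G₂ A B S₁ S₂ z hA hB hAB hS₁ hS₂ h₁ h₂ hz₁ hz₂ hd₁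
    hd₂
end

section
/- Suppose G₁ and G₂ share exactly two vertices x and y (and no edges), and S₁, S₂ are [1,2]-sets of G₁, G₂ respectively with x, y ∈ S₁ ∩ S₂. Then S₁ ∪ S₂ is a [1,2]-set of the union graph G = G₁ ∪ G₂. -/
open scoped Classical

theorem oneTwo_union_two_shared_vertices {V : Type*} [Fintype V]
    (G₁ G₂ : SimpleGraph V) (A B S₁ S₂ : Finset V) (x y : V) (hxy : x ≠ y)
    (hA : ∀ u v, G₁.Adj u v → u ∈ A ∧ v ∈ A)
    (hB : ∀ u v, G₂.Adj u v → u ∈ B ∧ v ∈ B)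
    (hAB : A ∩ B = {x, y})
    (hE : ∀ u v, ¬ (G₁.Adj u v ∧ G₂.Adj u v))
    (hS₁ : S₁ ⊆ A) (hS₂ : S₂ ⊆ B)
    (h₁ : IsOneTwoOn G₁ A S₁) (h₂ : IsOneTwoOn G₂ B S₂)
    (hx₁ : x ∈ S₁) (hx₂ : x ∈ S₂) (hy₁ : y ∈ S₁) (hy₂ : y ∈ S₂) :
    IsOneTwoOn (G₁ ⊔ G₂) (A ∪ B) (S₁ ∪ S₂) := by
  intro v hv hvS
  simp only [Finset.mem_union] at hv hvS
  push_neg at hvS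
  obtain ⟨hv1, hv2⟩ := hvS
  have hxyS : ∀ z, z ∈ A → z ∈ B → z ∈ S₁ ∧ z ∈ S₂ := by
    intro z hzA hzB
    have hz : z ∈ A ∩ B := Finset.mem_inter.mpr ⟨hzA, hzB⟩
    rw [hAB] at hz
    simp only [Finset.mem_insert, Finset.mem_singleton] at hz
    rcases hz with rfl | rfl
    · exact ⟨hx₁, hx₂⟩
    · exact ⟨hy₁, hy₂⟩
  rcases hv with hvA | hvB
  · have hvB : v ∉ B := fun h => hv1 (hxyS v hvA h).1
    have hcount : nbrCount (G₁ ⊔ G₂) (S₁ ∪ S₂) v = nbrCount G₁ S₁ v := by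
      unfold nbrCount
      congr 1
      ext u
      simp only [Finset.mem_filter, Finset.mem_univ, true_and,
        SimpleGraph.sup_adj, Finset.mem_union]
      constructor
      · rintro ⟨h1 | h2, hu⟩
        · refine ⟨h1, ?_⟩
          rcases hu with hu | hu
          · exact hu
          · exact (hxyS u (hA v u h1).2 (hS₂ hu)).1
        · exact absurd (hB v u h2).1 hvB
      · rintro ⟨h1, hu⟩; exact ⟨Or.inl h1, Or.inl hu⟩
    rw [hcount]; exact h₁ v hvA hv1
  · have hvA : v ∉ A := fun h => hv2 (hxyS v h hvB).2
    have hcount : nbrCount (G₁ ⊔ G₂) (S₁ ∪ S₂) v = nbrCount G₂ S₂ v := by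
      unfold nbrCount
      congr 1
      ext u
      simp only [Finset.mem_filter, Finset.mem_univ, true_and,
        SimpleGraph.sup_adj, Finset.mem_union]
      constructor
      · rintro ⟨h1 | h2, hu⟩
        · exact absurd (hA v u h1).1 hvA
        · refine ⟨h2, ?_⟩
          rcases hu with hu | hu
          · exact (hxyS u (hS₁ hu) (hB v u h2).2).2
          · exact hu
      · rintro ⟨h2, hu⟩; exact ⟨Or.inr h2, Or.inr hu⟩
    rw [hcount]; exact h₂ v hvB hv2
end
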